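/- Let c be an acyclic edge coloring of G − e where e = uv, and let β be a color not appearing on any edge incident to u or v. If the sets of colors appearing at u and at v (with respect to c) are disjoint, then extending c by assigning color β to e yields an acyclic edge coloring of G. -/

import Mathlib

/-- A proper edge coloring: edges sharing a vertex receive different colors. -/
def ProperEdgeColoring {V C : Type*} (G : SimpleGraph V) (c : Sym2 V → C) : Prop :=
  ∀ ⦃u v w : V⦄, G.Adj u v → G.Adj u w → v ≠ w → c s(u, v) ≠ c s(u, w)

/-- An acyclic edge coloring: a proper edge coloring with no bichromatic cycle. -/
def AcyclicEdgeColoring {V C : Type*} (G : SimpleGraph V) (c : Sym2 V → C) : Prop :=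
  ProperEdgeColoring G c ∧
    ∀ (v : V) (W : G.Walk v v), W.IsCycle →
      ¬ ∃ α β : C, ∀ e ∈ W.edges, c e = α ∨ c e = β

/-- `colorsAt G c x` (the set `F_x`): the set of colors appearing on edges of `G`
incident to the vertex `x`. -/
def colorsAt {V C : Type*} (G : SimpleGraph V) (c : Sym2 V → C) (x : V) : Set C :=
  {γ | ∃ y, G.Adj x y ∧ c s(x, y) = γ}

/-!
A new edge `uv` colored with a fresh color `β` keeps the coloring proper. A cycle avoiding `uv`
already lives in `G - uv`. A cycle through `uv` has a second edge at `u` and a second edge at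
`v`; their colors lie in `F_u` and `F_v`, so they differ from `β`, and if the cycle were
bichromatic on `{β, δ}` both would be `δ`, putting `δ` in `F_u ∩ F_v`.
-/

theorem SimpleGraph.Walk.IsCycle.exists_mem_edges_ne {V : Type*} {G : SimpleGraph V}
    {a u v : V} {W : G.Walk a a} (hW : W.IsCycle) (h : s(u, v) ∈ W.edges) :
    ∃ w, w ≠ v ∧ s(u, w) ∈ W.edges := by
  obtain ⟨x, y, hxy, hN⟩ := Set.ncard_eq_two.mp <|
    hW.ncard_neighborSet_toSubgraph_eq_two (W.fst_mem_support_of_mem_edges h)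
  have hmem (w : V) : w ∈ W.toSubgraph.neighborSet u ↔ s(u, w) ∈ W.edges := by
    rw [Subgraph.mem_neighborSet, ← Subgraph.mem_edgeSet, mem_edges_toSubgraph]
  by_cases hx : x = v
  · exact ⟨y, fun h => hxy (hx.trans h.symm), (hmem y).mp (hN ▸ by simp)⟩
  · exact ⟨x, hx, (hmem x).mp (hN ▸ by simp)⟩

section

open SimpleGraph Function

variable {V C : Type*} {G : SimpleGraph V} {c : Sym2 V → C}

theorem mem_colorsAt_deleteEdges {e : Sym2 V} {x y : V} (h : G.Adj x y) (he : s(x, y) ≠ e) :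
    c s(x, y) ∈ colorsAt (G.deleteEdges {e}) c x :=
  ⟨y, deleteEdges_adj.mpr ⟨h, he⟩, rfl⟩

variable {u v : V} {β : C}

theorem ne_of_notMem_colorsAt_union
    (hβ : β ∉ colorsAt (G.deleteEdges {s(u, v)}) c u ∪ colorsAt (G.deleteEdges {s(u, v)}) c v)
    {x y : V} (hx : x ∈ s(u, v)) (hxy : G.Adj x y) (hne : s(x, y) ≠ s(u, v)) :
    c s(x, y) ≠ β := by
  rintro rfl
  rcases Sym2.mem_iff.mp hx with rfl | rfl
  exacts [hβ (Or.inl (mem_colorsAt_deleteEdges hxy hne)),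
    hβ (Or.inr (mem_colorsAt_deleteEdges hxy hne))]

variable [DecidableEq V]

theorem ProperEdgeColoring.update (hc : ProperEdgeColoring (G.deleteEdges {s(u, v)}) c)
    (hβ : β ∉ colorsAt (G.deleteEdges {s(u, v)}) c u ∪ colorsAt (G.deleteEdges {s(u, v)}) c v) :
    ProperEdgeColoring G (update c s(u, v) β) := by
  intro a b d hab had hbd
  by_cases hb : s(a, b) = s(u, v) <;> by_cases hd : s(a, d) = s(u, v)
  · exact (hbd (Sym2.congr_right.mp (hb.trans hd.symm))).elim
  · rw [hb, update_self, update_of_ne hd]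
    exact (ne_of_notMem_colorsAt_union hβ (hb ▸ Sym2.mem_mk_left a b) had hd).symm
  · rw [hd, update_self, update_of_ne hb]
    exact ne_of_notMem_colorsAt_union hβ (hd ▸ Sym2.mem_mk_left a d) hab hb
  · rw [update_of_ne hb, update_of_ne hd]
    exact hc (deleteEdges_adj.mpr ⟨hab, hb⟩) (deleteEdges_adj.mpr ⟨had, hd⟩) hbd

theorem not_bichromatic_update_of_notMem_edges
    (hc : AcyclicEdgeColoring (G.deleteEdges {s(u, v)}) c) {a : V} {W : G.Walk a a}
    (hW : W.IsCycle) (huv : s(u, v) ∉ W.edges) :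
    ¬ ∃ α γ : C, ∀ e ∈ W.edges, update c s(u, v) β e = α ∨ update c s(u, v) β e = γ := by
  rintro ⟨α, γ, hcol⟩
  have hsub : ∀ e ∈ W.edges, e ∈ (G.deleteEdges {s(u, v)}).edgeSet := fun e he => by
    rw [edgeSet_deleteEdges]
    exact ⟨W.edges_subset_edgeSet he, fun h => huv (h ▸ he)⟩
  refine hc.2 a (W.transfer _ hsub) (hW.transfer hsub) ⟨α, γ, fun e he => ?_⟩
  rw [Walk.edges_transfer] at he
  simpa [update_of_ne (fun h => huv (h ▸ he) : e ≠ s(u, v))] using hcol e he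

theorem not_bichromatic_update_of_mem_edges
    (hβ : β ∉ colorsAt (G.deleteEdges {s(u, v)}) c u ∪ colorsAt (G.deleteEdges {s(u, v)}) c v)
    (hdisj : colorsAt (G.deleteEdges {s(u, v)}) c u ∩
      colorsAt (G.deleteEdges {s(u, v)}) c v = ∅)
    {a : V} {W : G.Walk a a} (hW : W.IsCycle) (huv : s(u, v) ∈ W.edges) :
    ¬ ∃ α γ : C, ∀ e ∈ W.edges, update c s(u, v) β e = α ∨ update c s(u, v) β e = γ := by
  rintro ⟨α, γ, hcol⟩
  obtain ⟨w, hwv, huw⟩ := hW.exists_mem_edges_ne huv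
  obtain ⟨w', hw'u, hvw'⟩ := hW.exists_mem_edges_ne (Sym2.eq_swap (a := u) ▸ huv)
  have hne : s(u, w) ≠ s(u, v) := fun h => hwv (Sym2.congr_right.mp h)
  have hne' : s(v, w') ≠ s(u, v) := by
    rw [Sym2.eq_swap (a := u)]
    exact fun h => hw'u (Sym2.congr_right.mp h)
  have hβ_col : β = α ∨ β = γ := by simpa using hcol _ huv
  have hu_col := hcol _ huw
  have hv_col := hcol _ hvw'
  rw [update_of_ne hne] at hu_col
  rw [update_of_ne hne'] at hv_col
  have hu_ne := ne_of_notMem_colorsAt_union hβ (Sym2.mem_mk_left u v)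
    (W.edges_subset_edgeSet huw) hne
  have hv_ne := ne_of_notMem_colorsAt_union hβ (Sym2.mem_mk_right u v)
    (W.edges_subset_edgeSet hvw') hne'
  have hsame : c s(u, w) = c s(v, w') := by grind
  refine (Set.eq_empty_iff_forall_notMem.mp hdisj) (c s(u, w)) ⟨?_, ?_⟩
  · exact mem_colorsAt_deleteEdges (W.edges_subset_edgeSet huw) hne
  · exact hsame ▸ mem_colorsAt_deleteEdges (W.edges_subset_edgeSet hvw') hne'

end

theorem extend_coloring_of_disjoint_colorsAt_general
    {V C : Type*} [DecidableEq V] (G : SimpleGraph V) (u v : V)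
    (c : Sym2 V → C)
    (hc : AcyclicEdgeColoring (G.deleteEdges {s(u, v)}) c)
    (β : C)
    (hβ : β ∉ colorsAt (G.deleteEdges {s(u, v)}) c u ∪
          colorsAt (G.deleteEdges {s(u, v)}) c v)
    (hdisj : colorsAt (G.deleteEdges {s(u, v)}) c u ∩
             colorsAt (G.deleteEdges {s(u, v)}) c v = ∅) :
    AcyclicEdgeColoring G (Function.update c s(u, v) β) := by
  refine ⟨hc.1.update hβ, fun a W hW => ?_⟩
  by_cases huv : s(u, v) ∈ W.edges
  · exact not_bichromatic_update_of_mem_edges hβ hdisj hW huv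
  · exact not_bichromatic_update_of_notMem_edges hc hW huv

/-- Let c be an acyclic edge coloring of G − uv and β a color appearing on no edge
incident to u or v in G − uv. If the color sets F_u and F_v are disjoint, then
assigning β to the edge uv yields an acyclic edge coloring of G. -/
theorem extend_coloring_of_disjoint_colorsAt
    {V C : Type*} [DecidableEq V] (G : SimpleGraph V) (u v : V) (huv : G.Adj u v)
    (c : Sym2 V → C)
    (hc : AcyclicEdgeColoring (G.deleteEdges {s(u, v)}) c)
    (β : C)
    (hβ : β ∉ colorsAt (G.deleteEdges {s(u, v)}) c u ∪
          colorsAt (G.deleteEdges {s(u, v)}) c v)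
    (hdisj : colorsAt (G.deleteEdges {s(u, v)}) c u ∩
             colorsAt (G.deleteEdges {s(u, v)}) c v = ∅) :
    AcyclicEdgeColoring G (Function.update c s(u, v) β) :=
  extend_coloring_of_disjoint_colorsAt_general G u v c hc β hβ hdisj
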